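/- Let q ∈ (1/2, 1) and define g : (0, 1/2] → ℝ by g(x) = (1−4q)x² + 2qx. Then (2q−1)/(4q−1) is a global attracting fixed point of g on (0, 1/2]: for every x ∈ (0, 1/2], the sequence of iterates (g^n(x))_{n≥1} converges to (2q−1)/(4q−1). -/

import Mathlib

/-!
Write p = (2q − 1)/(4q − 1). Factoring gives g(y) − p = (y − p)(1 − (4q − 1)y), and for
0 < m ≤ y ≤ 1/2 the factor |1 − (4q − 1)y| is at most max(1 − (4q − 1)m, 1/2) < 1.
The interval [m, 1/2] is invariant once m ≤ min(p, 1/4): g is concave, g(m) ≥ m because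
m ≤ p, g(1/2) = 1/4, and g ≤ 1/2 everywhere since q²/(4q − 1) ≤ 1/2. Taking also m ≤ x,
the iterates of x stay in [m, 1/2] and approach p geometrically.
-/

open Filter Topology

noncomputable def g (q : ℝ) (x : ℝ) : ℝ := (1 - 4 * q) * x ^ 2 + 2 * q * x

open Set

theorem tendsto_iterate_of_dist_le_mul {α : Type*} [PseudoMetricSpace α] {f : α → α}
    {s : Set α} (hs : MapsTo f s s) {p : α} {c : ℝ} (hc0 : 0 ≤ c) (hc1 : c < 1)
    (hf : ∀ y ∈ s, dist (f y) p ≤ c * dist y p) {x : α} (hx : x ∈ s) :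
    Tendsto (fun n => f^[n] x) atTop (𝓝 p) := by
  have hbound (n : ℕ) : dist (f^[n] x) p ≤ c ^ n * dist x p := by
    induction n with
    | zero => simp
    | succ n ih =>
      rw [Function.iterate_succ_apply', pow_succ', mul_assoc]
      exact (hf _ (hs.iterate n hx)).trans (mul_le_mul_of_nonneg_left ih hc0)
  refine tendsto_iff_dist_tendsto_zero.2 (squeeze_zero (fun _ => dist_nonneg) hbound ?_)
  simpa using (tendsto_pow_atTop_nhds_zero_of_lt_one hc0 hc1).mul_const (dist x p)

theorem g_sub_eq {q : ℝ} (hq : 4 * q - 1 ≠ 0) (y : ℝ) :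
    g q y - (2 * q - 1) / (4 * q - 1) =
      (y - (2 * q - 1) / (4 * q - 1)) * (1 - (4 * q - 1) * y) := by
  unfold g
  field_simp
  ring

theorem g_fixedPoint {q : ℝ} (hq : 4 * q - 1 ≠ 0) :
    g q ((2 * q - 1) / (4 * q - 1)) = (2 * q - 1) / (4 * q - 1) :=
  sub_eq_zero.1 (by simpa using g_sub_eq hq ((2 * q - 1) / (4 * q - 1)))

theorem concaveOn_g {q : ℝ} (hq : 1 ≤ 4 * q) : ConcaveOn ℝ univ (g q) := by
  have h : ConvexOn ℝ univ fun x : ℝ => (4 * q - 1) • x ^ 2 :=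
    (Even.convexOn_pow even_two).smul (by linarith)
  have hg : g q = (-fun x : ℝ => (4 * q - 1) • x ^ 2) + fun x => (2 * q) • id x := by
    ext x; simp only [g, smul_eq_mul, Pi.add_apply, Pi.neg_apply, id]; ring
  exact hg ▸ h.neg.add ((concaveOn_id convex_univ).smul (by linarith))

theorem g_le_half {q : ℝ} (hq1 : 1 / 2 < q) (hq2 : q < 1) (y : ℝ) : g q y ≤ 1 / 2 := by
  have hsq : (4 * q - 1) * (1 / 2 - g q y) =
      ((4 * q - 1) * y - q) ^ 2 + ((4 * q - 1) / 2 - q ^ 2) := by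
    unfold g; ring
  have hgap : 0 < (4 * q - 1) / 2 - q ^ 2 := by nlinarith
  nlinarith [sq_nonneg ((4 * q - 1) * y - q)]

theorem le_g_of_le_fixedPoint {q y : ℝ} (hq : 1 < 4 * q) (hy0 : 0 ≤ y)
    (hy : y ≤ (2 * q - 1) / (4 * q - 1)) : y ≤ g q y := by
  have hqpos : 0 < 4 * q - 1 := by linarith
  have hdiff : g q y - y = (4 * q - 1) * y * ((2 * q - 1) / (4 * q - 1) - y) := by
    unfold g; field_simp; ring
  nlinarith [mul_nonneg (mul_nonneg hqpos.le hy0) (sub_nonneg.2 hy)]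

theorem g_mapsTo_Icc {q m : ℝ} (hq1 : 1 / 2 < q) (hq2 : q < 1) (hm0 : 0 ≤ m)
    (hmp : m ≤ (2 * q - 1) / (4 * q - 1)) (hm4 : m ≤ 1 / 4) :
    MapsTo (g q) (Icc m (1 / 2)) (Icc m (1 / 2)) := by
  intro y hy
  have hhalf : g q (1 / 2) = 1 / 4 := by unfold g; ring
  have hmin :=
    (concaveOn_g (q := q) (by linarith)).min_le_of_mem_Icc (mem_univ m) (mem_univ _) hy
  rw [hhalf] at hmin
  exact ⟨(le_min (le_g_of_le_fixedPoint (by linarith) hm0 hmp) hm4).trans hmin,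
    g_le_half hq1 hq2 y⟩

theorem abs_g_sub_fixedPoint_le {q m y : ℝ} (hq1 : 1 / 2 < q) (hq2 : q < 1)
    (hy : y ∈ Icc m (1 / 2)) :
    |g q y - (2 * q - 1) / (4 * q - 1)| ≤
      max (1 - (4 * q - 1) * m) (1 / 2) * |y - (2 * q - 1) / (4 * q - 1)| := by
  rw [g_sub_eq (by linarith), abs_mul, mul_comm]
  refine mul_le_mul_of_nonneg_right (abs_le.2 ⟨?_, ?_⟩) (abs_nonneg _)
  · have : (4 * q - 1) * y ≤ (4 * q - 1) * (1 / 2) :=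
      mul_le_mul_of_nonneg_left hy.2 (by linarith)
    linarith [le_max_right (1 - (4 * q - 1) * m) (1 / 2)]
  · have : (4 * q - 1) * m ≤ (4 * q - 1) * y :=
      mul_le_mul_of_nonneg_left hy.1 (by linarith)
    linarith [le_max_left (1 - (4 * q - 1) * m) (1 / 2)]

/-- For q ∈ (1/2, 1), the point (2q−1)/(4q−1) is a global attracting fixed
point of g on (0, 1/2]: it is a fixed point and for every x ∈ (0, 1/2] the
iterates g^n(x) converge to it. -/
theorem g_global_attractor (q : ℝ) (hq1 : 1 / 2 < q) (hq2 : q < 1) (x : ℝ)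
    (hx : x ∈ Set.Ioc (0 : ℝ) (1 / 2)) :
    g q ((2 * q - 1) / (4 * q - 1)) = (2 * q - 1) / (4 * q - 1) ∧
    Tendsto (fun n => (g q)^[n] x) atTop (𝓝 ((2 * q - 1) / (4 * q - 1))) := by
  refine ⟨g_fixedPoint (by linarith), ?_⟩
  set p := (2 * q - 1) / (4 * q - 1)
  have hp : 0 < p := div_pos (by linarith) (by linarith)
  set m := min x (min p (1 / 4))
  have hm : 0 < m := lt_min hx.1 (lt_min hp (by norm_num))
  have hc : 1 - (4 * q - 1) * m < 1 := by nlinarith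
  refine tendsto_iterate_of_dist_le_mul (c := max (1 - (4 * q - 1) * m) (1 / 2))
    (g_mapsTo_Icc hq1 hq2 hm.le ((min_le_right _ _).trans (min_le_left _ _))
      ((min_le_right _ _).trans (min_le_right _ _)))
    ((le_max_right _ _).trans' (by norm_num)) (max_lt hc (by norm_num))
    (fun y hy => ?_) ⟨min_le_left _ _, hx.2⟩
  simpa only [Real.dist_eq] using abs_g_sub_fixedPoint_le hq1 hq2 hy
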